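/- Every element A of O^↑(1,n) (the group of linear isometries of Minkowski space R^{1,n} preserving time orientation) that maps the half-space {x ∈ H^n : x_1 ≤ s} to itself for some s ≠ 0 also preserves the totally geodesic hypersurface Σ_0 = {x ∈ H^n : x_1 = 0}. -/
import Mathlib

open Matrix

/-- The Minkowski inner product on `ℝ^{1,n}`. -/
def mink (n : ℕ) (x y : Fin (n + 1) → ℝ) : ℝ :=
  ∑ j, (if j = 0 then (-1 : ℝ) else 1) * x j * y j

lemma succ_succ_ne_one {m : ℕ} (j : Fin m) : (j.succ.succ : Fin (m + 2)) ≠ 1 := by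
  intro h
  rw [← Fin.succ_zero_eq_one] at h
  exact Fin.succ_ne_zero j (Fin.succ_inj.mp h)

lemma mink_split (m : ℕ) (x y : Fin (m + 2) → ℝ) :
    mink (m + 1) x y
      = -(x 0 * y 0) + x 1 * y 1 + ∑ j : Fin m, x j.succ.succ * y j.succ.succ := by
  show (∑ j : Fin (m + 2), (if j = 0 then (-1:ℝ) else 1) * x j * y j) = _
  rw [Fin.sum_univ_succ, Fin.sum_univ_succ]
  simp [Fin.succ_ne_zero, Fin.succ_zero_eq_one]
  ring

lemma mink_single (m : ℕ) (x : Fin (m + 2) → ℝ) (j : Fin (m + 2)) :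
    mink (m + 1) x (Pi.single j 1) = (if j = 0 then (-1:ℝ) else 1) * x j := by
  show (∑ i : Fin (m + 2), (if i = 0 then (-1:ℝ) else 1) * x i * (Pi.single j (1:ℝ) : Fin (m+2) → ℝ) i) = _
  rw [Finset.sum_eq_single j]
  · simp
  · intro i _ hij
    simp [Pi.single_eq_of_ne hij]
  · intro h; exact absurd (Finset.mem_univ j) h

lemma mink_inj (m : ℕ) (A : (Fin (m+2) → ℝ) →ₗ[ℝ] (Fin (m+2) → ℝ))
    (hiso : ∀ x y, mink (m+1) (A x) (A y) = mink (m+1) x y) :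
    Function.Injective A := by
  intro u v huv
  funext j
  have h := hiso u (Pi.single j 1)
  have h' := hiso v (Pi.single j 1)
  rw [huv] at h
  have heq : mink (m+1) u (Pi.single j 1) = mink (m+1) v (Pi.single j 1) := by rw [← h, h']
  rw [mink_single, mink_single] at heq
  rcases eq_or_ne j 0 with h0 | h0
  · subst h0; simpa using heq
  · simpa [h0] using heq

set_option maxHeartbeats 4000000 in
/-- Every element `A` of `O^↑(1,n)` (linear Minkowski isometry preserving time
orientation) that maps the half-space `H^n_s = {x ∈ H^n : x₁ ≤ s}` to itself for some
`s ≠ 0` also preserves the totally geodesic hypersurface `Σ₀ = {x ∈ H^n : x₁ = 0}`. -/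
theorem stmt13 (n : ℕ) (hn : 1 ≤ n)
    (A : (Fin (n + 1) → ℝ) →ₗ[ℝ] (Fin (n + 1) → ℝ))
    (hiso : ∀ x y, mink n (A x) (A y) = mink n x y)
    (htime : ∀ x, mink n x x = -1 → 0 < x 0 → 0 < A x 0)
    (s : ℝ) (hs : s ≠ 0)
    (hA : A '' {x | mink n x x = -1 ∧ 0 < x 0 ∧ x 1 ≤ s}
          = {x | mink n x x = -1 ∧ 0 < x 0 ∧ x 1 ≤ s}) :
    ∀ x : Fin (n + 1) → ℝ, mink n x x = -1 → 0 < x 0 → x 1 = 0 → A x 1 = 0 := by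
  obtain ⟨m, rfl⟩ : ∃ m, n = m + 1 := ⟨n - 1, (Nat.succ_pred_eq_of_pos hn).symm⟩
  have hinj : Function.Injective A := mink_inj m A hiso
  set E0 : Fin (m+2) → ℝ := vecCons 1 0 with hE0
  set E1 : Fin (m+2) → ℝ := vecCons 0 (vecCons 1 0) with hE1
  set α := A E0 1 with hαdef
  set β := A E1 1 with hβdef
  -- forward inclusion
  have hfwd : ∀ z : Fin (m+2) → ℝ, mink (m+1) z z = -1 → 0 < z 0 → z 1 ≤ s → A z 1 ≤ s := by
    intro z h1 h2 h3
    have hmem : A z ∈ A '' {x | mink (m+1) x x = -1 ∧ 0 < x 0 ∧ x 1 ≤ s} :=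
      ⟨z, ⟨h1, h2, h3⟩, rfl⟩
    rw [hA] at hmem
    exact hmem.2.2
  have hstrict : ∀ z : Fin (m+2) → ℝ, mink (m+1) z z = -1 → 0 < z 0 → s < z 1 → s < A z 1 := by
    intro z h1 h2 h3
    by_contra hcon
    push_neg at hcon
    have hmem : A z ∈ {x | mink (m+1) x x = -1 ∧ 0 < x 0 ∧ x 1 ≤ s} :=
      ⟨(hiso z z).trans h1, htime z h1 h2, hcon⟩
    rw [← hA] at hmem
    obtain ⟨w, hw, hwz⟩ := hmem
    have hwe : w = z := hinj hwz
    rw [hwe] at hw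
    linarith [hw.2.2]
  -- boundary lemma
  have hbd : ∀ y : Fin (m+2) → ℝ, mink (m+1) y y = -1 → 0 < y 0 → y 1 = s → A y 1 = s := by
    intro y h1 h2 h3
    have hub : A y 1 ≤ s := hfwd y h1 h2 h3.le
    by_contra hne
    have hlt : A y 1 < s := lt_of_le_of_ne hub hne
    set d := s - A y 1 with hd
    clear_value d
    have hdpos : 0 < d := by rw [hd]; linarith
    have hden : (0:ℝ) < 1 + |α| + |β| := by positivity
    set ε := d / (1 + |α| + |β|) with hε
    clear_value ε
    have hεpos : 0 < ε := by rw [hε]; exact div_pos hdpos hden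
    set t := s + ε with ht
    clear_value t
    have htε : t - s = ε := by rw [ht]; ring
    have hysplit := mink_split m y y
    rw [h1, h3] at hysplit
    set Ty := ∑ j : Fin m, y j.succ.succ * y j.succ.succ with hTy
    clear_value Ty
    have hTy0 : 0 ≤ Ty := by
      rw [hTy]; exact Finset.sum_nonneg fun j _ => mul_self_nonneg _
    set k := y 0 * y 0 - s * s with hk
    clear_value k
    have hk1 : 1 ≤ k := by rw [hk]; linarith [hysplit]
    have hkt : 0 < k + t * t := by nlinarith [mul_self_nonneg t]
    set u := Real.sqrt (k + t * t) with hu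
    clear_value u
    have hu2 : u * u = k + t * t := by rw [hu]; exact Real.mul_self_sqrt hkt.le
    have hu0 : 0 ≤ u := by rw [hu]; exact Real.sqrt_nonneg _
    set z : Fin (m+2) → ℝ := fun j => if j = 0 then u else if j = 1 then t else y j with hz
    clear_value z
    have hz0 : z 0 = u := by simp [hz]
    have hz1 : z 1 = t := by simp [hz]
    have hztail : ∀ j : Fin m, z j.succ.succ = y j.succ.succ := by
      intro j
      rw [hz]
      simp [Fin.succ_ne_zero, succ_succ_ne_one]
    have hzm : mink (m+1) z z = -1 := by
      rw [mink_split, hz0, hz1]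
      have hsum : ∑ j : Fin m, z j.succ.succ * z j.succ.succ = Ty := by
        rw [hTy]
        exact Finset.sum_congr rfl fun j _ => by rw [hztail]
      rw [hsum, hu2, hk]
      linarith [hysplit]
    have hz0pos : 0 < z 0 := by rw [hz0, hu]; exact Real.sqrt_pos.mpr hkt
    have hzstrict : s < A z 1 := hstrict z hzm hz0pos (by rw [hz1]; linarith)
    have hzdec : z = y + (u - y 0) • E0 + (t - s) • E1 := by
      rw [hz]
      funext j
      refine Fin.cases ?_ (fun i => ?_) j
      · simp [hE0, hE1, Matrix.vecHead, Matrix.vecTail]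
      · refine Fin.cases ?_ (fun i2 => ?_) i
        · simp [hE0, hE1, Matrix.vecHead, Matrix.vecTail, Fin.succ_zero_eq_one, h3]
        · simp [hE0, hE1, Matrix.vecHead, Matrix.vecTail, Fin.succ_ne_zero, succ_succ_ne_one]
    have hAz : A z 1 = A y 1 + (u - y 0) * α + (t - s) * β := by
      have hAz' : A z = A y + (u - y 0) • A E0 + (t - s) • A E1 := by
        rw [hzdec]; simp only [map_add, LinearMap.map_smul]
      rw [hαdef, hβdef]
      rw [hAz']
      simp
    have hy0 : y 0 * y 0 = k + s * s := by rw [hk]; ring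
    have hkey : k + t * s ≤ u * y 0 := by
      rcases le_or_gt (k + t * s) 0 with hh | hh
      · exact hh.trans (mul_nonneg hu0 h2.le)
      · have hsq : (u * y 0) * (u * y 0) = (k + t*t) * (k + s*s) := by
          rw [show (u * y 0) * (u * y 0) = (u*u)*(y 0 * y 0) by ring, hu2, hy0]
        nlinarith [hsq, mul_nonneg hu0 h2.le, hh,
          mul_nonneg (by linarith : (0:ℝ) ≤ k) (sq_nonneg (t - s))]
    have hbound : (u - y 0) * (u - y 0) ≤ ε * ε := by
      rw [← htε]
      nlinarith [hkey, hu2, hy0]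
    have habs : |u - y 0| ≤ ε := by
      rw [abs_le]
      constructor <;>
        nlinarith [hbound, hεpos, sq_nonneg (u - y 0 + ε), sq_nonneg (u - y 0 - ε)]
    have hp1 : (u - y 0) * α ≤ ε * |α| := by
      calc (u - y 0) * α ≤ |(u - y 0) * α| := le_abs_self _
        _ = |u - y 0| * |α| := abs_mul _ _
        _ ≤ ε * |α| := mul_le_mul_of_nonneg_right habs (abs_nonneg _)
    have hp2 : (t - s) * β ≤ ε * |β| := by
      rw [htε]
      exact mul_le_mul_of_nonneg_left (le_abs_self β) hεpos.le
    have hmul : ε * (1 + |α| + |β|) = d := by rw [hε]; exact div_mul_cancel₀ d hden.ne'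
    have hexp : ε + ε * |α| + ε * |β| = d := by rw [← hmul]; ring
    rw [hAz] at hzstrict
    linarith [hp1, hp2, hzstrict, hdpos]
  -- the standard boundary point P0 = (√(1+s²), s, 0, ..., 0)
  set c := Real.sqrt (1 + s*s) with hcdef
  clear_value c
  have hc2 : c * c = 1 + s*s := by
    rw [hcdef]; exact Real.mul_self_sqrt (by nlinarith [mul_self_nonneg s])
  have hcpos : 0 < c := by
    rw [hcdef]; exact Real.sqrt_pos.mpr (by nlinarith [mul_self_nonneg s])
  have hE0m : mink (m+1) E0 E0 = -1 := by
    rw [mink_split, hE0]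
    simp [Matrix.vecHead, Matrix.vecTail]
  have hE00 : E0 0 = 1 := by rw [hE0]; simp
  have hE01 : E0 1 = 0 := by rw [hE0]; simp [Matrix.vecHead, Matrix.vecTail]
  set P0 : Fin (m+2) → ℝ := vecCons c (vecCons s 0) with hP0
  clear_value P0
  have hP0m : mink (m+1) P0 P0 = -1 := by
    rw [mink_split, hP0]
    simp [Matrix.vecHead, Matrix.vecTail]
    linarith [hc2]
  have hP0dec : P0 = c • E0 + s • E1 := by
    rw [hP0, hE0, hE1]
    funext j
    refine Fin.cases ?_ (fun i => Fin.cases ?_ (fun i2 => ?_) i) j <;>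
      simp [Matrix.vecHead, Matrix.vecTail, Fin.succ_ne_zero, succ_succ_ne_one,
        Fin.succ_zero_eq_one]
  have hP0val : A P0 1 = c * α + s * β := by
    have h' : A P0 = c • A E0 + s • A E1 := by
      rw [hP0dec]; simp only [map_add, LinearMap.map_smul]
    rw [hαdef, hβdef, h']; simp
  have hEQ1 : c * α + s * β = s := by
    rw [← hP0val]
    exact hbd P0 hP0m (by rw [hP0]; simpa using hcpos) (by rw [hP0]; simp [Matrix.vecHead, Matrix.vecTail])
  -- α = 0
  have hα0 : α = 0 := by
    rcases Nat.eq_zero_or_pos m with hm | hm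
    · subst hm
      have hE1m : mink (0+1) E1 E1 = 1 := by
        rw [mink_split, hE1]; simp [Matrix.vecHead, Matrix.vecTail]
      have hE01m : mink (0+1) E0 E1 = 0 := by
        rw [mink_split, hE0, hE1]; simp [Matrix.vecHead, Matrix.vecTail]
      have h00 := (hiso E0 E0).trans hE0m
      have h11 := (hiso E1 E1).trans hE1m
      have h01 := (hiso E0 E1).trans hE01m
      rw [mink_split] at h00 h11 h01
      simp only [Finset.univ_eq_empty, Finset.sum_empty, add_zero] at h00 h11 h01
      rw [← hαdef] at h00 h01
      rw [← hβdef] at h11 h01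
      set a := A E0 0 with hadef
      set b := A E1 0 with hbdef2
      have e00 : a*a = α*α + 1 := by linarith [h00]
      have e11 : b*b = β*β - 1 := by linarith [h11]
      have e01 : a*b = α*β := by linarith [h01]
      have hq : β*β = α*α + 1 := by
        linear_combination (a*b + α*β) * e01 - (b*b) * e00 - (α*α + 1) * e11
      have hca : c * α = s * (1 - β) := by linarith [hEQ1]
      have hsq : (c*α)*(c*α) = (s*(1-β))*(s*(1-β)) := by rw [hca]
      have hfac : (β - 1) * (β + (1 + 2*(s*s))) = 0 := by
        linear_combination hsq - (α*α) * hc2 + (1 + s*s) * hq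
      rcases mul_eq_zero.mp hfac with hb1 | hb2
      · have hβ1 : β = 1 := by linarith
        rw [hβ1] at hEQ1
        have hcz : c * α = 0 := by linarith
        exact (mul_eq_zero.mp hcz).resolve_left hcpos.ne'
      · exfalso
        have hβv : β = -(1 + 2*(s*s)) := by linarith
        have hcα : c * α = s*(2 + 2*(s*s)) := by linear_combination hEQ1 - s * hβv
        have h2' : c * (α - 2*s*c) = 0 := by linear_combination hcα - (2*s) * hc2
        have hαv : α = 2*s*c := by
          have := (mul_eq_zero.mp h2').resolve_left hcpos.ne'
          linarith
        have hc1 : 1 ≤ c := by nlinarith [hc2, hcpos]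
        rcases lt_or_ge s 0 with hsneg | hspos
        · have hin : s < A E0 1 :=
            hstrict E0 hE0m (by rw [hE00]; norm_num) (by rw [hE01]; exact hsneg)
          rw [← hαdef] at hin
          nlinarith [hc1, hαv, hsneg, hin]
        · have hspos' : 0 < s := lt_of_le_of_ne hspos (Ne.symm hs)
          have hin : A E0 1 ≤ s :=
            hfwd E0 hE0m (by rw [hE00]; norm_num) (by rw [hE01]; exact hspos)
          rw [← hαdef] at hin
          nlinarith [hc1, hαv, hspos', hin]
    · obtain ⟨l, rfl⟩ : ∃ l, m = l + 1 := ⟨m - 1, (Nat.succ_pred_eq_of_pos hm).symm⟩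
      set c2 := Real.sqrt (2 + s*s) with hc2def
      clear_value c2
      have hc22 : c2 * c2 = 2 + s*s := by
        rw [hc2def]; exact Real.mul_self_sqrt (by nlinarith [mul_self_nonneg s])
      have hcc2 : c < c2 := by
        rw [hcdef, hc2def]
        exact Real.sqrt_lt_sqrt (by nlinarith [mul_self_nonneg s]) (by linarith)
      set Qp : Fin (l+3) → ℝ := vecCons c2 (vecCons s (vecCons 1 0)) with hQp
      set Qm : Fin (l+3) → ℝ := vecCons c2 (vecCons s (vecCons (-1) 0)) with hQm
      have hQpm : mink (l+1+1) Qp Qp = -1 := by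
        rw [mink_split, hQp]
        simp [Matrix.vecHead, Matrix.vecTail, Fin.sum_univ_succ]
        linarith [hc22]
      have hQmm : mink (l+1+1) Qm Qm = -1 := by
        rw [mink_split, hQm]
        simp [Matrix.vecHead, Matrix.vecTail, Fin.sum_univ_succ]
        linarith [hc22]
      have hbp : A Qp 1 = s :=
        hbd Qp hQpm (by rw [hQp]; simpa using (by nlinarith [hc22, mul_self_nonneg s] : (0:ℝ) < c2))
          (by rw [hQp]; simp [Matrix.vecHead, Matrix.vecTail])
      have hbm : A Qm 1 = s :=
        hbd Qm hQmm (by rw [hQm]; simpa using (by nlinarith [hc22, mul_self_nonneg s] : (0:ℝ) < c2))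
          (by rw [hQm]; simp [Matrix.vecHead, Matrix.vecTail])
      have hdec : Qp + Qm = (2*c2) • E0 + (2*s) • E1 := by
        rw [hQp, hQm, hE0, hE1]
        funext j
        refine Fin.cases ?_ (fun i => Fin.cases ?_ (fun i2 => Fin.cases ?_ (fun i3 => ?_) i2) i) j <;>
          simp [Matrix.vecHead, Matrix.vecTail, Fin.succ_ne_zero, succ_succ_ne_one,
            Fin.succ_zero_eq_one] <;> ring
      have hQval : A Qp 1 + A Qm 1 = 2*c2*α + 2*s*β := by
        have h' : A Qp + A Qm = (2*c2) • A E0 + (2*s) • A E1 := by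
          rw [← map_add, hdec]; simp only [map_add, LinearMap.map_smul]
        have h'' := congrFun h' 1
        rw [hαdef, hβdef]
        simpa using h''
      have hQ2 : c2 * α + s * β = s := by
        rw [hbp, hbm] at hQval; linarith
      have hsub : (c2 - c) * α = 0 := by linear_combination hQ2 - hEQ1
      exact (mul_eq_zero.mp hsub).resolve_left (sub_ne_zero_of_ne hcc2.ne')
  -- main argument
  intro x hxm hx0 hx1
  have hxsplit := mink_split m x x
  rw [hxm, hx1] at hxsplit
  set c' := Real.sqrt (x 0 * x 0 + s*s) with hc'def
  clear_value c'
  have hc'2 : c' * c' = x 0 * x 0 + s*s := by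
    rw [hc'def]; exact Real.mul_self_sqrt (by nlinarith [mul_pos hx0 hx0, mul_self_nonneg s])
  have hc'pos : 0 < c' := by
    rw [hc'def]; exact Real.sqrt_pos.mpr (by nlinarith [mul_pos hx0 hx0, mul_self_nonneg s])
  set T : Fin m → ℝ := fun j => x j.succ.succ with hT
  set yp : Fin (m+2) → ℝ := vecCons c' (vecCons s T) with hyp
  set ym : Fin (m+2) → ℝ := vecCons c' (vecCons s (-T)) with hym
  have hTsum : ∑ j : Fin m, T j * T j = x 0 * x 0 - 1 := by
    have h' : ∑ j : Fin m, T j * T j = ∑ j : Fin m, x j.succ.succ * x j.succ.succ :=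
      Finset.sum_congr rfl (fun j _ => by rw [hT])
    rw [h']; linarith [hxsplit]
  have hypm : mink (m+1) yp yp = -1 := by
    rw [mink_split, hyp]
    simp [Matrix.vecHead, Matrix.vecTail]
    linarith [hc'2, hTsum]
  have hymm : mink (m+1) ym ym = -1 := by
    rw [mink_split, hym]
    simp [Matrix.vecHead, Matrix.vecTail, neg_mul_neg]
    linarith [hc'2, hTsum]
  have hbp : A yp 1 = s :=
    hbd yp hypm (by rw [hyp]; simpa using hc'pos) (by rw [hyp]; simp [Matrix.vecHead, Matrix.vecTail])
  have hbm : A ym 1 = s :=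
    hbd ym hymm (by rw [hym]; simpa using hc'pos) (by rw [hym]; simp [Matrix.vecHead, Matrix.vecTail])
  have hdec1 : yp + ym = (2*c') • E0 + (2*s) • E1 := by
    rw [hyp, hym, hE0, hE1]
    funext j
    refine Fin.cases ?_ (fun i => Fin.cases ?_ (fun i2 => ?_) i) j <;>
      simp [Matrix.vecHead, Matrix.vecTail, Fin.succ_ne_zero, succ_succ_ne_one,
        Fin.succ_zero_eq_one] <;> ring
  have hdec2 : yp - ym = (2:ℝ) • x - (2 * x 0) • E0 := by
    rw [hyp, hym, hE0]
    funext j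
    refine Fin.cases ?_ (fun i => Fin.cases ?_ (fun i2 => ?_) i) j <;>
      simp [Matrix.vecHead, Matrix.vecTail, Fin.succ_ne_zero, succ_succ_ne_one,
        Fin.succ_zero_eq_one, hT, hx1] <;> ring
  have hv1 : A yp 1 + A ym 1 = 2*c'*α + 2*s*β := by
    have h' : A yp + A ym = (2*c') • A E0 + (2*s) • A E1 := by
      rw [← map_add, hdec1]; simp only [map_add, LinearMap.map_smul]
    have h'' := congrFun h' 1
    rw [hαdef, hβdef]
    simpa using h''
  have hv2 : A yp 1 - A ym 1 = 2 * A x 1 - 2 * x 0 * α := by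
    have h' : A yp - A ym = (2:ℝ) • A x - (2 * x 0) • A E0 := by
      rw [← map_sub, hdec2]; simp only [map_sub, LinearMap.map_smul]
    have h'' := congrFun h' 1
    rw [hαdef]
    simpa using h''
  have hfin : A x 1 = x 0 * α := by
    rw [hbp, hbm] at hv2; linarith
  rw [hfin, hα0, mul_zero]
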